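/- arXiv:hep-th/0003046 — 2 statements merged into one kernel-verified Lean document; each statement's English description precedes it below -/
import Mathlib

section
/- Let H : [0, ℓ) → ℝ be differentiable with H'(s) ≥ H(s)² - 1 for all s and H(0) ≥ 1 + δ for some δ > 0. Then H(s) ≥ coth(a - s) for all s ∈ [0, min(ℓ, a)), where a = arcoth(1 + δ). Consequently ℓ ≤ a, i.e., H cannot remain finite past s = a. -/
/-- Hyperbolic cotangent. -/
noncomputable def coth (x : ℝ) : ℝ := Real.cosh x / Real.sinh x

/-- Inverse hyperbolic cotangent on `(1, ∞)`. -/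
noncomputable def arcoth (y : ℝ) : ℝ := (1 / 2) * Real.log ((y + 1) / (y - 1))

lemma arcoth_pos {y : ℝ} (hy : 1 < y) : 0 < arcoth y := by
  have h1 : (0:ℝ) < y - 1 := by linarith
  have : (1:ℝ) < (y + 1) / (y - 1) := by
    rw [lt_div_iff₀ h1]; linarith
  have := Real.log_pos this
  rw [arcoth]; linarith

lemma arcoth_le_arcoth {x y : ℝ} (hx : 1 < x) (hxy : x ≤ y) : arcoth y ≤ arcoth x := by
  have hx1 : (0:ℝ) < x - 1 := by linarith
  have hy1 : (0:ℝ) < y - 1 := by linarith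
  have hratio : (y + 1) / (y - 1) ≤ (x + 1) / (x - 1) := by
    rw [div_le_div_iff₀ hy1 hx1]; nlinarith
  have hpos : (0:ℝ) < (y + 1) / (y - 1) := div_pos (by linarith) hy1
  have := Real.log_le_log hpos hratio
  rw [arcoth, arcoth]; linarith

lemma exp_sq_arcoth {y : ℝ} (hy : 1 < y) : Real.exp (arcoth y) ^ 2 = (y + 1) / (y - 1) := by
  have hpos : (0:ℝ) < (y + 1) / (y - 1) := by
    apply div_pos <;> linarith
  have h2 : (2:ℝ) * arcoth y = Real.log ((y + 1) / (y - 1)) := by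
    rw [arcoth]; ring
  calc Real.exp (arcoth y) ^ 2 = Real.exp (2 * arcoth y) := by
        rw [pow_two, ← Real.exp_add]; ring_nf
    _ = (y + 1) / (y - 1) := by rw [h2, Real.exp_log hpos]

lemma coth_arcoth {y : ℝ} (hy : 1 < y) : coth (arcoth y) = y := by
  set t := arcoth y with ht
  set E := Real.exp t with hE
  have hEpos : 0 < E := Real.exp_pos t
  have hE2 : E ^ 2 = (y + 1) / (y - 1) := exp_sq_arcoth hy
  have hy1 : (0:ℝ) < y - 1 := by linarith
  have hE2' : (y - 1) * E ^ 2 = y + 1 := by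
    field_simp at hE2
    linarith [hE2]
  have hE1 : 1 < E ^ 2 := by nlinarith
  have hsinh : Real.sinh t = (E - E⁻¹) / 2 := by
    rw [Real.sinh_eq, Real.exp_neg, ← hE]
  have hcosh : Real.cosh t = (E + E⁻¹) / 2 := by
    rw [Real.cosh_eq, Real.exp_neg, ← hE]
  have hsinh_pos : 0 < Real.sinh t := by
    rw [hsinh]
    have : E⁻¹ < E := by
      rw [inv_lt_iff_one_lt_mul₀ hEpos]; nlinarith
    linarith
  have hEne : E ≠ 0 := ne_of_gt hEpos
  rw [coth, div_eq_iff (ne_of_gt hsinh_pos), hsinh, hcosh]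
  field_simp
  nlinarith [hE2']

lemma coth_le_coth {x y : ℝ} (hx : 0 < x) (hxy : x ≤ y) : coth y ≤ coth x := by
  have hsx : 0 < Real.sinh x := Real.sinh_pos_iff.2 hx
  have hsy : 0 < Real.sinh y := Real.sinh_pos_iff.2 (lt_of_lt_of_le hx hxy)
  rw [coth, coth, div_le_div_iff₀ hsy hsx]
  have h1 : 0 ≤ Real.sinh (y - x) := Real.sinh_nonneg_iff.2 (by linarith)
  have h2 := Real.sinh_sub y x
  linarith [h2 ▸ h1]

/-- If `H : [0, ℓ) → ℝ` is differentiable with `H' ≥ H² - 1` and `H 0 ≥ 1 + δ`, `δ > 0`,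
then `H s ≥ coth (a - s)` on `[0, min ℓ a)` where `a = arcoth (1 + δ)`; consequently
`ℓ ≤ a`. -/
theorem statement1 (ℓ δ : ℝ) (hδ : 0 < δ) (hℓ : 0 < ℓ) (H H' : ℝ → ℝ)
    (hderiv : ∀ s ∈ Set.Ico (0 : ℝ) ℓ, HasDerivWithinAt H (H' s) (Set.Ico (0 : ℝ) ℓ) s)
    (hineq : ∀ s ∈ Set.Ico (0 : ℝ) ℓ, H' s ≥ H s ^ 2 - 1)
    (h0 : H 0 ≥ 1 + δ) :
    (∀ s ∈ Set.Ico (0 : ℝ) (min ℓ (arcoth (1 + δ))), H s ≥ coth (arcoth (1 + δ) - s)) ∧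
    ℓ ≤ arcoth (1 + δ) := by
  set a := arcoth (1 + δ) with ha_def
  have hδ1 : (1:ℝ) < 1 + δ := by linarith
  have hapos : 0 < a := arcoth_pos hδ1
  -- derivatives within Ici x
  have hderivI : ∀ x ∈ Set.Ico (0:ℝ) ℓ, HasDerivWithinAt H (H' x) (Set.Ici x) x := by
    intro x hx
    exact (hderiv x hx).mono_of_mem_nhdsWithin
      (Ico_mem_nhdsGE_of_mem ⟨hx.1, hx.2⟩)
  -- continuity of H on subintervals
  have hHcont : ∀ b : ℝ, b < ℓ → ContinuousOn H (Set.Icc 0 b) := by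
    intro b hb x hx
    exact ((hderiv x ⟨hx.1, lt_of_le_of_lt hx.2 hb⟩).continuousWithinAt).mono
      (fun y hy => ⟨hy.1, lt_of_le_of_lt hy.2 hb⟩)
  -- Step 1 : H stays above 1 + δ
  have step1 : ∀ s ∈ Set.Ico (0:ℝ) ℓ, 1 + δ ≤ H s := by
    intro s hs
    have key : ∀ x ∈ Set.Icc (0:ℝ) s, (fun _ : ℝ => 1 + δ) x ≤ H x :=
      image_le_of_deriv_right_lt_deriv_boundary' (f' := fun _ => (0:ℝ))
        continuousOn_const (fun x _ => hasDerivWithinAt_const x _ _) h0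
        (hHcont s hs.2) (fun x hx => hderivI x ⟨hx.1, hx.2.trans hs.2⟩)
        (fun x hx heq => by
          have hi := hineq x ⟨hx.1, hx.2.trans hs.2⟩
          have heq' : H x = 1 + δ := heq.symm
          show (0:ℝ) < H' x
          nlinarith [hi, heq'])
    exact key s ⟨hs.1, le_refl s⟩
  -- the substitution v = arcoth ∘ H
  set v : ℝ → ℝ := fun s => (1/2) * (Real.log (H s + 1) - Real.log (H s - 1)) with hv_def
  have hv_eq : ∀ s ∈ Set.Ico (0:ℝ) ℓ, v s = arcoth (H s) := by
    intro s hs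
    have h1 : H s + 1 ≠ 0 := by have := step1 s hs; intro h; nlinarith
    have h2 : H s - 1 ≠ 0 := by have := step1 s hs; intro h; nlinarith
    rw [hv_def, arcoth]
    simp only
    rw [Real.log_div h1 h2]
  -- derivative of v
  have hv' : ∀ x ∈ Set.Ico (0:ℝ) ℓ,
      HasDerivWithinAt v ((1/2) * (H' x / (H x + 1) - H' x / (H x - 1))) (Set.Ici x) x := by
    intro x hx
    have h1 : H x + 1 ≠ 0 := by have := step1 x hx; intro h; nlinarith
    have h2 : H x - 1 ≠ 0 := by have := step1 x hx; intro h; nlinarith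
    have d1 : HasDerivWithinAt (fun s => Real.log (H s + 1)) (H' x / (H x + 1)) (Set.Ici x) x :=
      HasDerivWithinAt.log ((hderivI x hx).add_const 1) h1
    have d2 : HasDerivWithinAt (fun s => Real.log (H s - 1)) (H' x / (H x - 1)) (Set.Ici x) x :=
      HasDerivWithinAt.log ((hderivI x hx).sub_const 1) h2
    exact (d1.sub d2).const_mul (1/2)
  -- derivative bound : v' ≤ -1
  have hvbound : ∀ x ∈ Set.Ico (0:ℝ) ℓ,
      (1/2) * (H' x / (H x + 1) - H' x / (H x - 1)) ≤ -1 := by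
    intro x hx
    have hH1 : 1 + δ ≤ H x := step1 x hx
    have hp : (0:ℝ) < H x + 1 := by linarith
    have hm : (0:ℝ) < H x - 1 := by linarith
    have hi := hineq x hx
    have hsq : (0:ℝ) < H x ^ 2 - 1 := by nlinarith
    have key : (1/2) * (H' x / (H x + 1) - H' x / (H x - 1)) = -(H' x / (H x ^ 2 - 1)) := by
      field_simp
      ring
    rw [key, neg_le, neg_neg, le_div_iff₀ hsq]
    nlinarith
  -- continuity of v on subintervals
  have hvcont : ∀ b : ℝ, b < ℓ → ContinuousOn v (Set.Icc 0 b) := by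
    intro b hb
    have hH := hHcont b hb
    have h1 : ContinuousOn (fun s => Real.log (H s + 1)) (Set.Icc 0 b) := by
      apply ContinuousOn.log (hH.add continuousOn_const)
      intro x hx
      have := step1 x ⟨hx.1, lt_of_le_of_lt hx.2 hb⟩
      intro h; simp only [Pi.add_apply] at h; nlinarith
    have h2 : ContinuousOn (fun s => Real.log (H s - 1)) (Set.Icc 0 b) := by
      apply ContinuousOn.log (hH.sub continuousOn_const)
      intro x hx
      have := step1 x ⟨hx.1, lt_of_le_of_lt hx.2 hb⟩
      intro h; simp only [Pi.sub_apply] at h; nlinarith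
    exact continuousOn_const.mul (h1.sub h2)
  -- Step 2 : v s ≤ v 0 - s
  have step2 : ∀ s ∈ Set.Ico (0:ℝ) ℓ, v s ≤ v 0 - s := by
    intro s hs
    have key : ∀ x ∈ Set.Icc (0:ℝ) s, v x ≤ (fun t => v 0 - t) x :=
      image_le_of_deriv_right_le_deriv_boundary
        (f' := fun x => (1/2) * (H' x / (H x + 1) - H' x / (H x - 1)))
        (B' := fun _ => (-1 : ℝ))
        (hvcont s hs.2) (fun x hx => hv' x ⟨hx.1, hx.2.trans hs.2⟩)
        (by simp) (continuousOn_const.sub continuousOn_id)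
        (fun x hx => by simpa using (hasDerivWithinAt_id x (Set.Ici x)).const_sub (v 0))
        (fun x hx => hvbound x ⟨hx.1, hx.2.trans hs.2⟩)
    exact key s ⟨hs.1, le_refl s⟩
  -- v 0 ≤ a
  have hv0 : v 0 ≤ a := by
    rw [hv_eq 0 ⟨le_refl 0, hℓ⟩, ha_def]
    exact arcoth_le_arcoth hδ1 h0
  -- arcoth (H s) ≤ a - s on [0, ℓ)
  have step2' : ∀ s ∈ Set.Ico (0:ℝ) ℓ, arcoth (H s) ≤ a - s := by
    intro s hs
    have := step2 s hs
    rw [hv_eq s hs] at this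
    linarith
  have hpos : ∀ s ∈ Set.Ico (0:ℝ) ℓ, 0 < arcoth (H s) := by
    intro s hs
    exact arcoth_pos (by have := step1 s hs; linarith)
  constructor
  · intro s hs
    have hsl : s < ℓ := lt_of_lt_of_le hs.2 (min_le_left _ _)
    have hsa : s < a := lt_of_lt_of_le hs.2 (min_le_right _ _)
    have hmem : s ∈ Set.Ico (0:ℝ) ℓ := ⟨hs.1, hsl⟩
    have h1 : 1 < H s := by have := step1 s hmem; linarith
    calc coth (a - s) ≤ coth (arcoth (H s)) :=
          coth_le_coth (hpos s hmem) (step2' s hmem)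
      _ = H s := coth_arcoth h1
  · by_contra h
    push_neg at h
    set s := (a + ℓ) / 2 with hs_def
    have hmem : s ∈ Set.Ico (0:ℝ) ℓ := ⟨by positivity, by rw [hs_def]; linarith⟩
    have h1 := hpos s hmem
    have h2 := step2' s hmem
    have : a - s < 0 := by rw [hs_def]; linarith
    linarith
end

section
/- Let M be a connected Riemannian manifold and f ∈ C⁰(M) satisfy Δf ≥ 0 in the support sense: for each p ∈ M and ε > 0 there is a C² function φ defined near p with φ ≤ f, φ(p) = f(p), and Δφ(p) ≥ -ε. If f attains a maximum on M, then f is constant. -/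
open Set Metric Filter

/-- The Laplacian of a function on Euclidean space, as the trace of the second derivative
over the standard orthonormal basis. -/
noncomputable def lapl {n : ℕ} (f : EuclideanSpace ℝ (Fin n) → ℝ)
    (p : EuclideanSpace ℝ (Fin n)) : ℝ :=
  ∑ i : Fin n,
    fderiv ℝ (fun x => fderiv ℝ f x (EuclideanSpace.single i 1)) p (EuclideanSpace.single i 1)

variable {n : ℕ}

-- 1D second derivative test
lemma hopf_oneDim {g g1 : ℝ → ℝ} {c : ℝ}
    (hg : ∀ᶠ t in nhds (0:ℝ), HasDerivAt g (g1 t) t)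
    (hmax : IsLocalMax g 0)
    (hg1 : HasDerivAt g1 c 0) : c ≤ 0 := by
  by_contra hc
  push_neg at hc
  have hg10 : g1 0 = 0 := by
    have h1 : deriv g 0 = 0 := hmax.deriv_eq_zero
    have h2 : deriv g 0 = g1 0 := hg.self_of_nhds.deriv
    rw [← h2, h1]
  have hev : ∀ᶠ t in nhdsWithin (0:ℝ) (Ioi 0), 0 < g1 t := by
    have h2 : ∀ᶠ t in nhdsWithin (0:ℝ) {(0:ℝ)}ᶜ, 0 < slope g1 0 t :=
      (hasDerivAt_iff_tendsto_slope.mp hg1).eventually (eventually_gt_nhds hc)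
    have h3 : ∀ᶠ t in nhdsWithin (0:ℝ) (Ioi 0), 0 < slope g1 0 t :=
      h2.filter_mono (nhdsWithin_mono 0 (fun t ht => ne_of_gt ht))
    filter_upwards [h3, self_mem_nhdsWithin] with t ht ht0
    have hs : slope g1 0 t = g1 t / t := by
      simp [slope_def_field, hg10]
    rw [hs] at ht
    have := mul_pos (mem_Ioi.mp ht0) ht
    rwa [mul_div_cancel₀ _ (ne_of_gt (mem_Ioi.mp ht0))] at this
  obtain ⟨u, hu, husub⟩ := mem_nhdsGT_iff_exists_Ioo_subset.mp hev
  have hT : {t : ℝ | HasDerivAt g (g1 t) t ∧ g t ≤ g 0} ∈ nhds (0:ℝ) := by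
    filter_upwards [hg, hmax] with t h1 h2 using ⟨h1, h2⟩
  obtain ⟨r, hr, hball⟩ := Metric.mem_nhds_iff.mp hT
  set ε : ℝ := min u r / 2 with hεdef
  have hε : 0 < ε := by
    have : (0:ℝ) < min u r := lt_min (mem_Ioi.mp hu) hr
    positivity
  have hIcc : ∀ t ∈ Icc (0:ℝ) ε, HasDerivAt g (g1 t) t ∧ g t ≤ g 0 := by
    intro t ht
    apply hball
    rw [mem_ball, Real.dist_eq, sub_zero, abs_of_nonneg ht.1]
    calc t ≤ ε := ht.2
    _ < min u r := by rw [hεdef]; linarith [lt_min (mem_Ioi.mp hu) hr]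
    _ ≤ r := min_le_right _ _
  have hmono : StrictMonoOn g (Icc (0:ℝ) ε) := by
    apply strictMonoOn_of_deriv_pos (convex_Icc 0 ε)
    · exact fun t ht => ((hIcc t ht).1.continuousAt.continuousWithinAt)
    · intro t ht
      rw [interior_Icc] at ht
      rw [(hIcc t ⟨le_of_lt ht.1, le_of_lt ht.2⟩).1.deriv]
      apply husub
      exact ⟨ht.1, lt_of_lt_of_le (lt_of_lt_of_le ht.2 (by rw [hεdef]; linarith [min_le_left u r, lt_min (mem_Ioi.mp hu) hr])) (le_refl _)⟩
  have h1 : g 0 < g ε := hmono (left_mem_Icc.mpr (le_of_lt hε)) (right_mem_Icc.mpr (le_of_lt hε)) hε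
  have h2 : g ε ≤ g 0 := (hIcc ε (right_mem_Icc.mpr (le_of_lt hε))).2
  linarith

lemma hopf_second_deriv_le {ψ : EuclideanSpace ℝ (Fin n) → ℝ} {z v : EuclideanSpace ℝ (Fin n)}
    (hψ : ContDiffAt ℝ 2 ψ z) (hmax : IsLocalMax ψ z) :
    fderiv ℝ (fun x => fderiv ℝ ψ x v) z v ≤ 0 := by
  obtain ⟨u, hu, hcd⟩ := hψ.contDiffOn (le_refl 2) (by norm_num)
  have hV : ContDiffOn ℝ 2 ψ (interior u) := hcd.mono interior_subset
  have hzV : z ∈ interior u := mem_interior_iff_mem_nhds.mpr hu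
  have hdiff : ∀ x ∈ interior u, DifferentiableAt ℝ ψ x := fun x hx =>
    (hV.differentiableOn (by norm_num)).differentiableAt (isOpen_interior.mem_nhds hx)
  set L : ℝ → EuclideanSpace ℝ (Fin n) := fun t => z + t • v with hLdef
  have hLc : Continuous L := continuous_const.add (continuous_id.smul continuous_const)
  have hL0 : L 0 = z := by simp [hLdef]
  have hLd : ∀ t, HasDerivAt L v t := fun t => by
    show HasDerivAt (fun t : ℝ => z + t • v) v t
    simpa using ((hasDerivAt_id t).smul_const v).const_add z
  set g1 : ℝ → ℝ := fun t => fderiv ℝ ψ (L t) v with hg1def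
  have hg : ∀ᶠ t in nhds (0:ℝ), HasDerivAt (fun t => ψ (L t)) (g1 t) t := by
    have hev : ∀ᶠ t in nhds (0:ℝ), L t ∈ interior u := by
      have : Tendsto L (nhds 0) (nhds z) := by
        rw [← hL0]; exact hLc.tendsto 0
      exact this.eventually (isOpen_interior.eventually_mem hzV)
    filter_upwards [hev] with t ht
    exact (hdiff _ ht).hasFDerivAt.comp_hasDerivAt t (hLd t)
  have hA : DifferentiableAt ℝ (fun x => fderiv ℝ ψ x v) (L 0) := by
    rw [hL0]
    have h1 : ContDiffAt ℝ 1 (fderiv ℝ ψ) z := hψ.fderiv_right (by norm_num)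
    exact (ContinuousLinearMap.apply ℝ ℝ v).differentiableAt.comp z (h1.differentiableAt one_ne_zero)
  have hg1 : HasDerivAt g1 (fderiv ℝ (fun x => fderiv ℝ ψ x v) (L 0) v) 0 := by
    have h := hA.hasFDerivAt.comp_hasDerivAt 0 (hLd 0)
    exact h
  have hgm : IsLocalMax (fun t => ψ (L t)) 0 := by
    have hT : Tendsto L (nhds (0:ℝ)) (nhds z) := by rw [← hL0]; exact hLc.tendsto 0
    have h2 : ∀ᶠ t in nhds (0:ℝ), ψ (L t) ≤ ψ z := hT.eventually hmax
    unfold IsLocalMax IsMaxFilter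
    filter_upwards [h2] with t ht
    rw [hL0]
    exact ht
  have := hopf_oneDim hg hgm hg1
  rwa [hL0] at this

lemma hopf_lapl_nonpos {ψ : EuclideanSpace ℝ (Fin n) → ℝ} {z : EuclideanSpace ℝ (Fin n)}
    (hψ : ContDiffAt ℝ 2 ψ z) (hmax : IsLocalMax ψ z) : lapl ψ z ≤ 0 :=
  Finset.sum_nonpos fun i _ => hopf_second_deriv_le hψ hmax

lemma hopf_lapl_add {φ w : EuclideanSpace ℝ (Fin n) → ℝ} {p : EuclideanSpace ℝ (Fin n)}
    (hφ : ContDiffAt ℝ 2 φ p) (hw : ContDiff ℝ 2 w) (δ : ℝ) :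
    lapl (fun x => φ x + δ * w x) p = lapl φ p + δ * lapl w p := by
  obtain ⟨u, hu, hcd⟩ := hφ.contDiffOn (le_refl 2) (by norm_num)
  have hV : ContDiffOn ℝ 2 φ (interior u) := hcd.mono interior_subset
  have hzV : p ∈ interior u := mem_interior_iff_mem_nhds.mpr hu
  have hdiff : ∀ x ∈ interior u, DifferentiableAt ℝ φ x := fun x hx =>
    (hV.differentiableOn (by norm_num)).differentiableAt (isOpen_interior.mem_nhds hx)
  have key : ∀ v : EuclideanSpace ℝ (Fin n),
      fderiv ℝ (fun x => fderiv ℝ (fun y => φ y + δ * w y) x v) p v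
        = fderiv ℝ (fun x => fderiv ℝ φ x v) p v + δ * fderiv ℝ (fun x => fderiv ℝ w x v) p v := by
    intro v
    have hev : (fun x => fderiv ℝ (fun y => φ y + δ * w y) x v)
        =ᶠ[nhds p] (fun x => fderiv ℝ φ x v + δ * fderiv ℝ w x v) := by
      filter_upwards [isOpen_interior.mem_nhds hzV] with x hx
      have h1 : HasFDerivAt φ (fderiv ℝ φ x) x := (hdiff x hx).hasFDerivAt
      have h2 : HasFDerivAt w (fderiv ℝ w x) x :=
        (hw.differentiable (by norm_num) x).hasFDerivAt
      have h3 := h1.add (h2.const_mul δ)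
      rw [(show HasFDerivAt (fun y => φ y + δ * w y) _ x from h3).fderiv]
      simp
    rw [hev.fderiv_eq]
    have hφd : DifferentiableAt ℝ (fun x => fderiv ℝ φ x v) p := by
      have h1 : ContDiffAt ℝ 1 (fderiv ℝ φ) p := hφ.fderiv_right (by norm_num)
      exact (ContinuousLinearMap.apply ℝ ℝ v).differentiableAt.comp p (h1.differentiableAt one_ne_zero)
    have hwd : DifferentiableAt ℝ (fun x => fderiv ℝ w x v) p := by
      have h1 : ContDiffAt ℝ 1 (fderiv ℝ w) p := (hw.contDiffAt).fderiv_right (by norm_num)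
      exact (ContinuousLinearMap.apply ℝ ℝ v).differentiableAt.comp p (h1.differentiableAt one_ne_zero)
    have h4 := hφd.hasFDerivAt.add (hwd.hasFDerivAt.const_mul δ)
    rw [(show HasFDerivAt (fun x => fderiv ℝ φ x v + δ * fderiv ℝ w x v) _ p from h4).fderiv]
    simp
  unfold lapl
  rw [Finset.mul_sum, ← Finset.sum_add_distrib]
  exact Finset.sum_congr rfl fun i _ => key _

/-- The barrier function. -/
noncomputable def wf (a : EuclideanSpace ℝ (Fin n)) (ρ c : ℝ)
    (x : EuclideanSpace ℝ (Fin n)) : ℝ :=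
  c * (ρ^2 - ‖x - a‖^2)^2 + (ρ^2 - ‖x - a‖^2)

lemma wf_contDiff (a : EuclideanSpace ℝ (Fin n)) (ρ c : ℝ) : ContDiff ℝ 2 (wf a ρ c) := by
  have h : ContDiff ℝ 2 (fun x : EuclideanSpace ℝ (Fin n) => ρ^2 - ‖x - a‖^2) :=
    contDiff_const.sub ((contDiff_id.sub contDiff_const).norm_sq ℝ)
  exact (contDiff_const.mul (h.pow 2)).add h

lemma hasFDerivAt_normsq (a x : EuclideanSpace ℝ (Fin n)) :
    HasFDerivAt (fun y => ‖y - a‖^2) (2 • (innerSL ℝ (x - a))) x := by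
  have h := ((hasFDerivAt_id x).sub_const a).norm_sq
  simpa using h

lemma fderiv_wf_apply (a : EuclideanSpace ℝ (Fin n)) (ρ c : ℝ)
    (x v : EuclideanSpace ℝ (Fin n)) :
    fderiv ℝ (wf a ρ c) x v
      = (-2*(2*c*(ρ^2 - ‖x - a‖^2)+1)) * (inner ℝ (x - a) v : ℝ) := by
  have hu : HasFDerivAt (fun y : EuclideanSpace ℝ (Fin n) => ρ^2 - ‖y - a‖^2)
      (-((2 • (innerSL ℝ (x - a))) : EuclideanSpace ℝ (Fin n) →L[ℝ] ℝ)) x :=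
    (hasFDerivAt_normsq a x).const_sub (ρ^2)
  have hP : HasDerivAt (fun t : ℝ => c * t^2 + t) (2*c*(ρ^2 - ‖x - a‖^2)+1) (ρ^2 - ‖x - a‖^2) := by
    have := (show HasDerivAt (fun t : ℝ => c * t^2 + t) _ (ρ^2 - ‖x - a‖^2) from
      ((hasDerivAt_pow 2 (ρ^2 - ‖x - a‖^2)).const_mul c).add
      (hasDerivAt_id (ρ^2 - ‖x - a‖^2)))
    convert this using 1
    ring
  have hw : HasFDerivAt (wf a ρ c)
      ((2*c*(ρ^2 - ‖x - a‖^2)+1) •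
        (-((2 • (innerSL ℝ (x - a))) : EuclideanSpace ℝ (Fin n) →L[ℝ] ℝ))) x := by
    have := hP.comp_hasFDerivAt x hu
    exact this
  rw [hw.fderiv]
  simp only [ContinuousLinearMap.smul_apply, ContinuousLinearMap.neg_apply, innerSL_apply_apply,
    smul_eq_mul, nsmul_eq_mul, Nat.cast_ofNat]
  ring

lemma norm_sq_eq_sum (y : EuclideanSpace ℝ (Fin n)) : ‖y‖^2 = ∑ i, (y i)^2 := by
  rw [EuclideanSpace.norm_eq, Real.sq_sqrt (by positivity)]
  exact Finset.sum_congr rfl fun i _ => by rw [Real.norm_eq_abs, sq_abs]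

lemma lapl_wf (a : EuclideanSpace ℝ (Fin n)) (ρ c : ℝ) (p : EuclideanSpace ℝ (Fin n)) :
    lapl (wf a ρ c) p
      = 8*c*‖p - a‖^2 - 2*(n:ℝ)*(2*c*(ρ^2 - ‖p - a‖^2)+1) := by
  have hfun : ∀ i : Fin n, (fun x => fderiv ℝ (wf a ρ c) x (EuclideanSpace.single i 1))
      = fun x => (-2*(2*c*(ρ^2-‖x-a‖^2)+1)) * (x i - a i) := by
    intro i
    funext x
    rw [fderiv_wf_apply]
    congr 1
    rw [EuclideanSpace.inner_single_right]
    simp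
  have key : ∀ i : Fin n,
      fderiv ℝ (fun x => fderiv ℝ (wf a ρ c) x (EuclideanSpace.single i 1)) p
          (EuclideanSpace.single i 1)
        = (-2*(2*c*(ρ^2-‖p-a‖^2)+1)) + 8*c*(p i - a i)^2 := by
    intro i
    rw [hfun i]
    have hm : HasFDerivAt (fun x : EuclideanSpace ℝ (Fin n) => -2*(2*c*(ρ^2-‖x-a‖^2)+1))
        ((-4*c) • (-((2 • (innerSL ℝ (p - a))) : EuclideanSpace ℝ (Fin n) →L[ℝ] ℝ))) p := by
      have h1 : HasFDerivAt (fun x : EuclideanSpace ℝ (Fin n) => (-4*c)*(ρ^2-‖x-a‖^2) - 2)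
          ((-4*c) • (-((2 • (innerSL ℝ (p - a))) : EuclideanSpace ℝ (Fin n) →L[ℝ] ℝ))) p :=
        (((hasFDerivAt_normsq a p).const_sub (ρ^2)).const_mul (-4*c)).sub_const 2
      have h2 : (fun x : EuclideanSpace ℝ (Fin n) => -2*(2*c*(ρ^2-‖x-a‖^2)+1))
          = fun x : EuclideanSpace ℝ (Fin n) => (-4*c)*(ρ^2-‖x-a‖^2) - 2 := by
        funext x; ring
      rw [h2]
      exact h1
    have ht : HasFDerivAt (fun x : EuclideanSpace ℝ (Fin n) => x i - a i)
        ((EuclideanSpace.proj i : EuclideanSpace ℝ (Fin n) →L[ℝ] ℝ)) p := by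
      have := (EuclideanSpace.proj (𝕜 := ℝ) (ι := Fin n) i).hasFDerivAt (x := p)
      exact this.sub_const (a i)
    have hprod := hm.mul ht
    rw [(show HasFDerivAt (fun x : EuclideanSpace ℝ (Fin n) => -2*(2*c*(ρ^2-‖x-a‖^2)+1) * (x i - a i)) _ p from hprod).fderiv]
    simp only [ContinuousLinearMap.add_apply, ContinuousLinearMap.smul_apply,
      ContinuousLinearMap.neg_apply, innerSL_apply_apply, smul_eq_mul, nsmul_eq_mul, Nat.cast_ofNat]
    have hproj : (EuclideanSpace.proj i : EuclideanSpace ℝ (Fin n) →L[ℝ] ℝ)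
        (EuclideanSpace.single i 1) = 1 := by
      simp [PiLp.proj_apply, EuclideanSpace.single_apply]
    have hinner : (inner ℝ (p - a) (EuclideanSpace.single i (1:ℝ)) : ℝ) = p i - a i := by
      rw [EuclideanSpace.inner_single_right]; simp
    rw [hproj, hinner]
    ring
  unfold lapl
  rw [Finset.sum_congr rfl fun i _ => key i]
  rw [Finset.sum_add_distrib, Finset.sum_const, Finset.card_univ, Fintype.card_fin]
  have : ∑ i : Fin n, 8*c*(p i - a i)^2 = 8*c*‖p - a‖^2 := by
    rw [norm_sq_eq_sum, Finset.mul_sum]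
    exact Finset.sum_congr rfl fun i _ => by simp
  rw [this]
  push_cast
  ring

/-- Key contradiction: no strict-subharmonic perturbation can have a local max. -/
lemma hopf_contradiction {f w : EuclideanSpace ℝ (Fin n) → ℝ}
    (hsub : ∀ p : EuclideanSpace ℝ (Fin n), ∀ ε : ℝ, 0 < ε →
      ∃ U ∈ nhds p, ∃ φ : EuclideanSpace ℝ (Fin n) → ℝ,
        ContDiffOn ℝ 2 φ U ∧ (∀ x ∈ U, φ x ≤ f x) ∧ φ p = f p ∧ -ε ≤ lapl φ p)
    {x₀ : EuclideanSpace ℝ (Fin n)} {δ L : ℝ} (hδ : 0 < δ) (hL : 0 < L)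
    (hw : ContDiff ℝ 2 w) (hlw : L ≤ lapl w x₀)
    {N : Set (EuclideanSpace ℝ (Fin n))} (hN : N ∈ nhds x₀)
    (hloc : ∀ x ∈ N, f x + δ * w x ≤ f x₀ + δ * w x₀) : False := by
  obtain ⟨U, hU, φ, hφ, hφle, hφeq, hφlapl⟩ := hsub x₀ (δ*L/2) (by positivity)
  have hφat : ContDiffAt ℝ 2 φ x₀ := hφ.contDiffAt hU
  have hψmax : IsLocalMax (fun x => φ x + δ * w x) x₀ := by
    unfold IsLocalMax IsMaxFilter
    filter_upwards [hU, hN] with x hxU hxN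
    calc φ x + δ * w x ≤ f x + δ * w x := by linarith [hφle x hxU]
      _ ≤ f x₀ + δ * w x₀ := hloc x hxN
      _ = φ x₀ + δ * w x₀ := by rw [hφeq]
  have h1 : lapl (fun x => φ x + δ * w x) x₀ ≤ 0 :=
    hopf_lapl_nonpos (hφat.add ((hw.contDiffAt).const_smul δ)) hψmax
  have h2 := hopf_lapl_add hφat hw δ
  rw [h2] at h1
  nlinarith

set_option maxHeartbeats 1000000 in
/-- Hopf–Calabi maximum principle: if a continuous function `f` on a connected Riemannian
manifold (here Euclidean space) satisfies `Δf ≥ 0` in the support sense — for each `p` and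
`ε > 0` there is a `C²` lower support function `φ` near `p` with `φ ≤ f`, `φ p = f p` and
`Δφ(p) ≥ -ε` — and `f` attains a maximum, then `f` is constant. -/
theorem statement11 {n : ℕ} (f : EuclideanSpace ℝ (Fin n) → ℝ) (hf : Continuous f)
    (hsub : ∀ p : EuclideanSpace ℝ (Fin n), ∀ ε : ℝ, 0 < ε →
      ∃ U ∈ nhds p, ∃ φ : EuclideanSpace ℝ (Fin n) → ℝ,
        ContDiffOn ℝ 2 φ U ∧ (∀ x ∈ U, φ x ≤ f x) ∧ φ p = f p ∧ -ε ≤ lapl φ p)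
    (hmax : ∃ p, ∀ x, f x ≤ f p) :
    ∀ x y, f x = f y := by
  obtain ⟨p₀, hp₀⟩ := hmax
  suffices h : ∀ x, f x = f p₀ by intro x y; rw [h x, h y]
  by_contra hcon
  push_neg at hcon
  obtain ⟨q, hq⟩ := hcon
  have hqlt : f q < f p₀ := lt_of_le_of_ne (hp₀ q) hq
  rcases Nat.eq_zero_or_pos n with hn | hn
  · subst hn
    haveI : Subsingleton (EuclideanSpace ℝ (Fin 0)) :=
      ⟨fun a b => by ext i; exact i.elim0⟩
    exact hq (by rw [Subsingleton.elim q p₀])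
  have hn1 : (1:ℝ) ≤ n := by exact_mod_cast hn
  set m := f p₀ with hm
  set A : Set (EuclideanSpace ℝ (Fin n)) := {x | f x < m} with hA
  have hAo : IsOpen A := isOpen_lt hf continuous_const
  have hAcne : Aᶜ.Nonempty := ⟨p₀, by simp [hA, hm]⟩
  have hAc_closed : IsClosed Aᶜ := hAo.isClosed_compl
  set ρ := infDist q Aᶜ with hρ
  have hρpos : 0 < ρ := by
    rw [hρ]
    rw [← hAc_closed.notMem_iff_infDist_pos hAcne]
    simp [hA, hqlt]
  obtain ⟨z, hzAc, hz⟩ := hAc_closed.exists_infDist_eq_dist hAcne q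
  have hfz : f z = m := le_antisymm (hp₀ z) (not_lt.mp hzAc)
  have hzq : ‖z - q‖ = ρ := by
    rw [hρ, hz, dist_eq_norm, norm_sub_rev]
  have hball : ∀ x : EuclideanSpace ℝ (Fin n), ‖x - q‖ < ρ → f x < m := by
    intro x hx
    by_contra h
    have hxAc : x ∈ Aᶜ := by simp [hA]; exact not_lt.mp h
    have := infDist_le_dist_of_mem (x := q) hxAc
    rw [← hρ, dist_eq_norm, norm_sub_rev] at this
    linarith
  -- constants
  set c : ℝ := n / ρ^2 with hc
  set τ : ℝ := ρ^2 / (8 + 4*n) with hτ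
  have hden : (0:ℝ) < 8 + 4*n := by positivity
  have hτpos : 0 < τ := by rw [hτ]; positivity
  have hτlt : τ < ρ^2 := by
    rw [hτ, div_lt_iff₀ hden]
    nlinarith [hρpos]
  have hcpos : 0 < c := by rw [hc]; positivity
  have hcρ : c * ρ^2 = n := by rw [hc]; field_simp
  have hcτ : c * τ = n / (8 + 4*n) := by rw [hc, hτ]; field_simp
  have hcτlt : c * τ < 1 := by
    rw [hcτ, div_lt_one hden]; linarith
  set w := wf q ρ c with hw
  have hwcd : ContDiff ℝ 2 w := wf_contDiff q ρ c
  -- laplacian lower bound on annulus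
  have hlapl : ∀ x : EuclideanSpace ℝ (Fin n), ρ^2 - τ ≤ ‖x - q‖^2 → ‖x - q‖^2 ≤ ρ^2 + τ →
      5*(n:ℝ) ≤ lapl w x := by
    intro x h1 h2
    rw [hw, lapl_wf]
    have e2 : τ * (8 + 4*(n:ℝ)) = ρ^2 := by rw [hτ]; field_simp
    have e3 : c * τ * (8 + 4*(n:ℝ)) = n := by rw [mul_assoc, e2, hcρ]
    have P1 : 0 ≤ c * (‖x - q‖^2 - (ρ^2 - τ)) := mul_nonneg hcpos.le (by linarith)
    have P2 : 0 ≤ (n:ℝ) * c * (τ - (ρ^2 - ‖x - q‖^2)) :=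
      mul_nonneg (mul_nonneg (by positivity) hcpos.le) (by linarith)
    nlinarith [hcρ, e3, P1, P2]
  -- w values
  have hw_sphere : ∀ x : EuclideanSpace ℝ (Fin n), ‖x - q‖^2 = ρ^2 → w x = 0 := by
    intro x hx; rw [hw, wf, hx]; ring
  have hw_inner : ∀ x : EuclideanSpace ℝ (Fin n), ‖x - q‖^2 = ρ^2 - τ →
      w x = c*τ^2 + τ := by
    intro x hx; rw [hw, wf, hx]; ring
  have hw_outer : ∀ x : EuclideanSpace ℝ (Fin n), ρ^2 ≤ ‖x - q‖^2 → ‖x - q‖^2 ≤ ρ^2 + τ →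
      w x ≤ 0 := by
    intro x h1 h2
    rw [hw, wf]
    have hu1 : -τ ≤ ρ^2 - ‖x - q‖^2 := by linarith
    have hu2 : ρ^2 - ‖x - q‖^2 ≤ 0 := by linarith
    nlinarith [hcτlt, hcpos, hτpos]
  -- the compact annulus
  set K : Set (EuclideanSpace ℝ (Fin n)) :=
    {x | ρ^2 - τ ≤ ‖x - q‖^2 ∧ ‖x - q‖^2 ≤ ρ^2} with hK
  have hQcont : Continuous (fun x : EuclideanSpace ℝ (Fin n) => ‖x - q‖^2) :=
    ((continuous_id.sub continuous_const).norm).pow 2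
  have hKcl : IsClosed K :=
    (isClosed_le continuous_const hQcont).inter (isClosed_le hQcont continuous_const)
  have hKsub : K ⊆ closedBall q ρ := by
    intro x hx
    rw [mem_closedBall, dist_eq_norm]
    nlinarith [hx.2, norm_nonneg (x - q), hρpos]
  have hKcompact : IsCompact K :=
    isCompact_of_isClosed_isBounded hKcl (isBounded_closedBall.subset hKsub)
  have hzK : z ∈ K := by
    constructor <;> rw [hzq] <;> linarith
  -- inner sphere point and max of f there
  set K₁ : Set (EuclideanSpace ℝ (Fin n)) := {x | ‖x - q‖^2 = ρ^2 - τ} with hK₁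
  have hK₁compact : IsCompact K₁ := by
    refine isCompact_of_isClosed_isBounded (isClosed_eq hQcont continuous_const)
      ((isBounded_closedBall (x := q) (r := ρ)).subset ?_)
    intro x hx
    rw [mem_closedBall, dist_eq_norm]
    have hxx : ‖x - q‖^2 = ρ^2 - τ := hx
    nlinarith [norm_nonneg (x - q), hρpos, hτpos]
  have hK₁ne : K₁.Nonempty := by
    refine ⟨q + (Real.sqrt (ρ^2 - τ)/ρ) • (z - q), ?_⟩
    have h1 : (q + (Real.sqrt (ρ^2 - τ)/ρ) • (z - q)) - q = (Real.sqrt (ρ^2 - τ)/ρ) • (z - q) := by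
      abel
    show ‖(q + (Real.sqrt (ρ^2 - τ)/ρ) • (z - q)) - q‖^2 = ρ^2 - τ
    rw [h1, norm_smul, Real.norm_eq_abs, hzq, mul_pow, sq_abs, div_pow,
      Real.sq_sqrt (by linarith)]
    field_simp
  obtain ⟨x₀, hx₀K, hx₀max⟩ := hK₁compact.exists_isMaxOn hK₁ne hf.continuousOn
  have hx₀lt : f x₀ < m := by
    apply hball
    have h1 : ‖x₀ - q‖^2 = ρ^2 - τ := hx₀K
    nlinarith [norm_nonneg (x₀ - q), hρpos, hτpos]
  set η : ℝ := m - f x₀ with hη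
  have hηpos : 0 < η := by rw [hη]; linarith
  set W : ℝ := c*τ^2 + τ with hW
  have hWpos : 0 < W := by rw [hW]; positivity
  set δ : ℝ := η / (2*W) with hδdef
  have hδpos : 0 < δ := by rw [hδdef]; positivity
  have hδW : δ * W = η/2 := by rw [hδdef]; field_simp
  -- max principle on K
  have hKbound : ∀ x ∈ K, f x + δ * w x ≤ m := by
    have hvc : ContinuousOn (fun x => f x + δ * w x) K :=
      (hf.add (continuous_const.mul hwcd.continuous)).continuousOn
    obtain ⟨xs, hxsK, hxsmax⟩ := hKcompact.exists_isMaxOn ⟨z, hzK⟩ hvc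
    suffices hs : f xs + δ * w xs ≤ m by
      intro x hx; exact le_trans (hxsmax hx) hs
    rcases eq_or_lt_of_le hxsK.1 with heq | hlt1
    · rw [hw_inner xs heq.symm]
      have h1 : f xs ≤ f x₀ := hx₀max (show xs ∈ K₁ from heq.symm)
      have h2 : δ * W = η/2 := hδW
      have h3 : η = m - f x₀ := hη
      nlinarith
    rcases eq_or_lt_of_le hxsK.2 with heq2 | hlt2
    · rw [hw_sphere xs heq2, mul_zero, add_zero]
      exact hp₀ xs
    · exfalso
      refine hopf_contradiction (N := {x | ρ^2 - τ < ‖x - q‖^2} ∩ {x | ‖x - q‖^2 < ρ^2})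
        hsub hδpos (show (0:ℝ) < 5*n by positivity) hwcd
        (hlapl xs (le_of_lt hlt1) (by linarith)) ?_ ?_
      · exact (((isOpen_lt continuous_const hQcont).inter
          (isOpen_lt hQcont continuous_const)).mem_nhds ⟨hlt1, hlt2⟩)
      · intro x hx
        exact hxsmax ⟨le_of_lt hx.1, le_of_lt hx.2⟩
  -- final contradiction at z
  refine hopf_contradiction (N := {x | ρ^2 - τ < ‖x - q‖^2} ∩ {x | ‖x - q‖^2 < ρ^2 + τ})
    hsub hδpos (show (0:ℝ) < 5*n by positivity) hwcd
    (hlapl z (by rw [hzq]; linarith) (by rw [hzq]; linarith)) ?_ ?_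
  · exact (((isOpen_lt continuous_const hQcont).inter
      (isOpen_lt hQcont continuous_const)).mem_nhds
      ⟨show ρ^2 - τ < ‖z - q‖^2 by rw [hzq]; linarith,
       show ‖z - q‖^2 < ρ^2 + τ by rw [hzq]; linarith⟩)
  · intro x hx
    rw [hfz, hw_sphere z (by rw [hzq])]
    rcases le_or_gt (‖x - q‖^2) (ρ^2) with hle | hgt
    · have := hKbound x ⟨le_of_lt hx.1, hle⟩
      linarith
    · have h1 := hw_outer x (le_of_lt hgt) (le_of_lt hx.2)
      have h2 : f x ≤ m := hp₀ x
      nlinarith [hδpos]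
end
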